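/- arXiv:2310.11218 — 2 statements merged into one kernel-verified Lean document; each statement's English description precedes it below -/
import Mathlib

section
/- Let q ≥ 2, g > 0, N₁, N₂ be real numbers satisfying the Hallouin–Perret inequality N₂ - (q²+1) ≤ 2gq - (N₁ - (q+1))²/g, and suppose N₁ ≥ 0. If g ≥ 2q + 2, then (N₂ - N₁)/2 ≤ (q² + 1 + 2gq)/2 - (q+1)²/(2g). -/
theorem stmt_9 (q g N₁ N₂ : ℝ) (hq : 2 ≤ q) (hg : 0 < g)
    (hHP : N₂ - (q ^ 2 + 1) ≤ 2 * g * q - (N₁ - (q + 1)) ^ 2 / g)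
    (hN₁ : 0 ≤ N₁) (h : g ≥ 2 * q + 2) :
    (N₂ - N₁) / 2 ≤ (q ^ 2 + 1 + 2 * g * q) / 2 - (q + 1) ^ 2 / (2 * g) := by
  have h1 : (N₁ - (q + 1)) ^ 2 / g * g = (N₁ - (q + 1)) ^ 2 :=
    div_mul_cancel₀ _ hg.ne'
  have h2 : (q + 1) ^ 2 / (2 * g) * (2 * g) = (q + 1) ^ 2 :=
    div_mul_cancel₀ _ (by positivity)
  nlinarith [mul_nonneg hN₁ (by linarith : (0:ℝ) ≤ N₁ + g - 2 * (q + 1)),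
    mul_le_mul_of_nonneg_right hHP hg.le]
end

section
/- Let q ≥ 2, g > 0, N₁, N₂ be real numbers satisfying N₂ - (q²+1) ≤ 2gq - (N₁ - (q+1))²/g. If g ≤ 2q + 2, then (N₂ - N₁)/2 ≤ (q² + 1 + 2gq)/2 - (4(q+1) - g)/8. -/
theorem stmt_10 (q g N₁ N₂ : ℝ) (hq : 2 ≤ q) (hg : 0 < g)
    (hHP : N₂ - (q ^ 2 + 1) ≤ 2 * g * q - (N₁ - (q + 1)) ^ 2 / g)
    (h : g ≤ 2 * q + 2) :
    (N₂ - N₁) / 2 ≤ (q ^ 2 + 1 + 2 * g * q) / 2 - (4 * (q + 1) - g) / 8 := by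
  have h1 : (N₁ - (q + 1)) ^ 2 / g = (N₁ - (q + 1)) ^ 2 * g⁻¹ := by ring
  have h2 : (N₁ - (q + 1) + g / 2) ^ 2 / g ≥ 0 := div_nonneg (sq_nonneg _) hg.le
  have h3 : (N₁ - (q + 1) + g / 2) ^ 2 / g
      = (N₁ - (q + 1)) ^ 2 / g + (N₁ - (q + 1)) + g / 4 := by
    field_simp; ring
  linarith [h3 ▸ h2]
end
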